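/- Let p be an odd prime and define F(n,k) = (84n^2 - 56nk + 4k^2 + 52n - 12k + 5) * (-1)^k * (1/2)_n * (1/2)_{n+k} * (1/2)_{n-k}^2 / (2^{4n} * (1)_n^2 * (1)_{2n-k+1}) and G(n,k) = 64n^2 * (-1)^k * (1/2)_n * (1/2)_{n+k-1} * (1/2)_{n-k}^2 / (2^{4n} * (1)_n^2 * (1)_{2n-k}). Then sum over n = 0 to (p-1)/2 of F(n,0) equals F((p-1)/2, p) plus the sum over k = 1 to p of G((p+1)/2, k). -/

import Mathlib

open Finset

/-- Pochhammer symbol `(a)_m` for rational `a` and integer `m`: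
`(a)_m = a(a+1)⋯(a+m-1)` for `m ≥ 0`, and `(a)_{-m} = ∏_{j=1}^m 1/(a-j)`. -/
noncomputable def poch (a : ℚ) (m : ℤ) : ℚ :=
  if 0 ≤ m then ∏ i ∈ Finset.range m.toNat, (a + i)
  else ∏ j ∈ Finset.range (-m).toNat, 1 / (a - (j + 1))

/-- Guillera's WZ-pair function `F`. -/
noncomputable def F (n k : ℤ) : ℚ :=
  ((84*n^2 - 56*n*k + 4*k^2 + 52*n - 12*k + 5 : ℤ) : ℚ) * (-1 : ℚ)^k *
    poch (1/2) n * poch (1/2) (n + k) * (poch (1/2) (n - k))^2 /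
      ((2 : ℚ)^(4*n) * (poch 1 n)^2 * poch 1 (2*n - k + 1))

/-- Guillera's WZ-pair function `G`. -/
noncomputable def G (n k : ℤ) : ℚ :=
  (64 : ℚ) * (n : ℚ)^2 * (-1 : ℚ)^k *
    poch (1/2) n * poch (1/2) (n + k - 1) * (poch (1/2) (n - k))^2 /
      ((2 : ℚ)^(4*n) * (poch 1 n)^2 * poch 1 (2*n - k))

/-!
`F` and `G` form a WZ pair: `F n k - F n (k + 1) = G (n + 1) (k + 1) - G n (k + 1)`, which becomes
a polynomial identity once each Pochhammer symbol is reduced by `(a)_{m+1} = (a)_m (a + m)`.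
Summing it over `0 ≤ n ≤ (p - 1)/2` and `0 ≤ k < p` telescopes in `k` on the left and in `n` on
the right. The boundary terms `G 0 k` vanish, and so does `F n p` for `n < (p - 1)/2`, because
then `(1)_{2n-p+1}` has negative index.
-/

lemma poch_natCast (a : ℚ) (t : ℕ) : poch a t = ∏ i ∈ range t, (a + i) := by
  simp [poch]

lemma poch_neg_natCast (a : ℚ) (t : ℕ) :
    poch a (-t) = ∏ j ∈ range t, 1 / (a - (j + 1)) := by
  rcases Nat.eq_zero_or_pos t with rfl | ht
  · simp [poch]
  · rw [poch, if_neg (by omega), neg_neg, Int.toNat_natCast]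

lemma poch_add_one (a : ℚ) (m : ℤ) (h : a + m ≠ 0) : poch a (m + 1) = poch a m * (a + m) := by
  obtain ⟨t, rfl | rfl⟩ := Int.eq_nat_or_neg m
  · rw [← Nat.cast_add_one, poch_natCast, poch_natCast, prod_range_succ]
    simp
  · rcases t with _ | s
    · simp [poch]
    · rw [show -((s + 1 : ℕ) : ℤ) + 1 = -s by push_cast; ring, poch_neg_natCast,
        poch_neg_natCast, prod_range_succ]
      push_cast at h ⊢
      rw [show a + -((s : ℚ) + 1) = a - (s + 1) by ring] at h ⊢
      field_simp

lemma poch_half_add_one (m : ℤ) : poch (1 / 2) (m + 1) = poch (1 / 2) m * (1 / 2 + m) := by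
  refine poch_add_one _ m fun h ↦ ?_
  have : ((2 * m + 1 : ℤ) : ℚ) = 0 := by push_cast; linarith
  have : 2 * m + 1 = 0 := by exact_mod_cast this
  omega

lemma poch_one_of_neg {m : ℤ} (h : m < 0) : poch 1 m = 0 := by
  obtain ⟨s, rfl⟩ : ∃ s : ℕ, m = -((s + 1 : ℕ) : ℤ) := ⟨(-m - 1).toNat, by omega⟩
  rw [poch_neg_natCast]
  exact prod_eq_zero (mem_range.2 s.succ_pos) (by simp)

/-- Since `(1)_m = 0` for `m < 0` (it has a factor `1/0`), this recurrence holds for every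
integer `m`, so no case analysis on the sign of `2n - k` is needed in `F_sub_F_add_one`. -/
lemma poch_one_inv (m : ℤ) : (poch 1 m)⁻¹ = (m + 1) * (poch 1 (m + 1))⁻¹ := by
  rcases lt_or_ge m 0 with h | h
  · rcases eq_or_lt_of_le (Int.add_one_le_iff.2 h) with h' | h'
    · rw [poch_one_of_neg h, inv_zero, show (m : ℚ) + 1 = 0 by exact_mod_cast h', zero_mul]
    · rw [poch_one_of_neg h, poch_one_of_neg h']
      simp
  · have h1 : (1 : ℚ) + m ≠ 0 := by positivity
    rw [poch_add_one 1 m h1, mul_inv, add_comm (m : ℚ)]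
    field_simp

theorem F_sub_F_add_one (n k : ℤ) : F n k - F n (k + 1) = G (n + 1) (k + 1) - G n (k + 1) := by
  have hn := poch_half_add_one n
  have hnk := poch_half_add_one (n + k)
  have hnk' : poch (1 / 2) (n - k) = poch (1 / 2) (n - k - 1) * (1 / 2 + (n - k - 1 : ℤ)) := by
    rw [← poch_half_add_one, sub_add_cancel]
  have hd := poch_one_inv (2 * n - k)
  have hd' : (poch 1 (2 * n - k - 1))⁻¹ = (2 * n - k - 1 + 1 : ℤ) * (poch 1 (2 * n - k))⁻¹ := by
    simpa using poch_one_inv (2 * n - k - 1)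
  simp only [F, G]
  rw [show n + 1 + (k + 1) - 1 = n + k + 1 by ring, show n + (k + 1) - 1 = n + k by ring,
    show n + (k + 1) = n + k + 1 by ring, show n + 1 - (k + 1) = n - k by ring,
    show 2 * (n + 1) - (k + 1) = 2 * n - k + 1 by ring,
    show 2 * n - (k + 1) + 1 = 2 * n - k by ring, show 2 * n - (k + 1) = 2 * n - k - 1 by ring,
    show n - (k + 1) = n - k - 1 by ring, show 4 * (n + 1) = 4 * n + 4 by ring,
    zpow_add₀ (two_ne_zero' ℚ), zpow_add_one₀ (neg_ne_zero.2 (one_ne_zero' ℚ)), hn, hnk, hnk']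
  simp only [div_eq_mul_inv, mul_inv, ← inv_pow]
  rw [poch_one_inv n, hd', hd]
  push_cast
  ring

theorem sum_sub_eq_sum_of_wz {M : Type*} [AddCommGroup M] {f g : ℕ → ℕ → M}
    (hwz : ∀ n k, f n k - f n (k + 1) = g (n + 1) (k + 1) - g n (k + 1))
    (hg : ∀ k, g 0 k = 0) (N K : ℕ) :
    ∑ n ∈ range N, (f n 0 - f n K) = ∑ k ∈ range K, g N (k + 1) := by
  calc ∑ n ∈ range N, (f n 0 - f n K)
      = ∑ n ∈ range N, ∑ k ∈ range K, (g (n + 1) (k + 1) - g n (k + 1)) := by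
        simp only [← hwz, sum_range_sub']
    _ = ∑ k ∈ range K, g N (k + 1) := by
        rw [sum_comm]
        refine sum_congr rfl fun k _ ↦ ?_
        rw [sum_range_sub (g · (k + 1)), hg, sub_zero]

lemma F_eq_zero_of_lt {n k : ℤ} (h : 2 * n - k + 1 < 0) : F n k = 0 := by
  rw [F, poch_one_of_neg h, mul_zero, div_zero]

lemma G_zero_left (k : ℤ) : G 0 k = 0 := by
  simp [G]

theorem wz_telescoped_general (p : ℕ) (hodd : Odd p) :
    ∑ n ∈ Finset.range ((p - 1)/2 + 1), F n 0 =
      F (((p : ℤ) - 1)/2) p + ∑ k ∈ Finset.Icc 1 p, G (((p : ℤ) + 1)/2) k := by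
  obtain ⟨m, rfl⟩ := hodd
  have htele := sum_sub_eq_sum_of_wz (f := fun n k ↦ F n k) (g := fun n k ↦ G n k)
    (fun n k ↦ by push_cast; exact F_sub_F_add_one n k) (fun k ↦ G_zero_left k) (m + 1) (2 * m + 1)
  have hF : ∑ n ∈ range (m + 1), F n ((2 * m + 1 : ℕ) : ℤ) = F m ((2 * m + 1 : ℕ) : ℤ) := by
    rw [sum_range_succ, sum_eq_zero fun n hn ↦ F_eq_zero_of_lt ?_, zero_add]
    have := mem_range.1 hn
    push_cast
    omega
  rw [sum_sub_distrib, hF] at htele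
  rw [show (2 * m + 1 - 1) / 2 + 1 = m + 1 by omega,
    show (((2 * m + 1 : ℕ) : ℤ) - 1) / 2 = m by omega,
    show (((2 * m + 1 : ℕ) : ℤ) + 1) / 2 = m + 1 by omega,
    ← Ico_add_one_right_eq_Icc, sum_Ico_eq_sum_range, add_tsub_cancel_right]
  push_cast at htele ⊢
  simp only [add_comm (1 : ℤ)]
  linear_combination htele

theorem wz_telescoped (p : ℕ) (hp : p.Prime) (hodd : Odd p) :
    ∑ n ∈ Finset.range ((p - 1)/2 + 1), F n 0 =
      F (((p : ℤ) - 1)/2) p + ∑ k ∈ Finset.Icc 1 p, G (((p : ℤ) + 1)/2) k :=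
  wz_telescoped_general p hodd
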